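/- arXiv:2512.12555 — 4 statements merged into one kernel-verified Lean document; each statement's English description precedes it below -/
import Mathlib

section
/- Let μ_1,...,μ_N be probability measures on ℝ^d with finite p-th moments and let γ ∈ P((ℝ^d)^N) be a coupling with marginals μ_1,...,μ_N. Then the multi-marginal transport cost with infimal convolution cost satisfies ∫ c(x_1,...,x_N) dγ ≥ inf_ν Σ_{i=1}^N W_p^p(ν, μ_i), where the infimum is over probability measures ν with finite p-th moment. More precisely, for any measurable selection z̄(x) of minimizers of z ↦ Σ_i |x_i - z|^p, setting ν = z̄_# γ gives Σ_{i=1}^N W_p^p(ν, μ_i) ≤ ∫ c dγ. -/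
open scoped BigOperators ENNReal
open MeasureTheory

/-- `p`-Wasserstein cost (to the `p`-th power), as an infimum over couplings. -/
noncomputable def Wpp (p : ℝ) (d : ℕ)
    (α β : Measure (EuclideanSpace ℝ (Fin d))) : ℝ≥0∞ :=
  ⨅ π ∈ {π : Measure (EuclideanSpace ℝ (Fin d) × EuclideanSpace ℝ (Fin d)) |
      π.map Prod.fst = α ∧ π.map Prod.snd = β},
    ∫⁻ q, ENNReal.ofReal (‖q.1 - q.2‖ ^ p) ∂π

/-- If `γ` couples `μ₁,…,μ_N` and `z̄` is a measurable selection of minimizers of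
`z ↦ ∑ i, ‖x i - z‖ ^ p`, then `ν = z̄_# γ` satisfies
`∑ i, W_p^p(ν, μ i) ≤ ∫ c dγ`; in particular `∫ c dγ ≥ inf_ν ∑ i, W_p^p(ν, μ i)`. -/
theorem multimarginal_cost_ge_barycentre_cost
    (p : ℝ) (hp : 1 < p) (d N : ℕ) (hd : 1 ≤ d) (hN : 1 ≤ N)
    (μ : Fin N → Measure (EuclideanSpace ℝ (Fin d)))
    (hprob : ∀ i, IsProbabilityMeasure (μ i))
    (hmom : ∀ i, ∫⁻ y, ENNReal.ofReal (‖y‖ ^ p) ∂(μ i) < ∞)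
    (γ : Measure (Fin N → EuclideanSpace ℝ (Fin d)))
    (hγprob : IsProbabilityMeasure γ)
    (hmarg : ∀ i, γ.map (fun x => x i) = μ i)
    (zbar : (Fin N → EuclideanSpace ℝ (Fin d)) → EuclideanSpace ℝ (Fin d))
    (hzbar_meas : Measurable zbar)
    (hzbar_min : ∀ x, ∀ w : EuclideanSpace ℝ (Fin d),
      ∑ i, ‖x i - zbar x‖ ^ p ≤ ∑ i, ‖x i - w‖ ^ p) :
    (∑ i, Wpp p d (γ.map zbar) (μ i)) ≤
      ∫⁻ x, ENNReal.ofReal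
        (⨅ z : EuclideanSpace ℝ (Fin d), ∑ i, ‖x i - z‖ ^ p) ∂γ := by
  have hp0 : 0 ≤ p := le_of_lt (lt_trans one_pos hp)
  have hmeas : ∀ i : Fin N,
      Measurable (fun x : Fin N → EuclideanSpace ℝ (Fin d) =>
        ENNReal.ofReal (‖x i - zbar x‖ ^ p)) := fun i =>
    (((Real.continuous_rpow_const hp0).measurable.comp ((measurable_pi_apply i).sub hzbar_meas).norm).ennreal_ofReal)
  -- Step 1: each Wasserstein cost is bounded by the coupling cost
  have key : ∀ i : Fin N, Wpp p d (γ.map zbar) (μ i) ≤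
      ∫⁻ x, ENNReal.ofReal (‖x i - zbar x‖ ^ p) ∂γ := by
    intro i
    set π : Measure (EuclideanSpace ℝ (Fin d) × EuclideanSpace ℝ (Fin d)) :=
      γ.map (fun x => (zbar x, x i)) with hπ
    have hm : Measurable (fun x : Fin N → EuclideanSpace ℝ (Fin d) =>
        (zbar x, x i)) := hzbar_meas.prodMk (measurable_pi_apply i)
    have hmem : π ∈ {π : Measure (EuclideanSpace ℝ (Fin d) × EuclideanSpace ℝ (Fin d)) |
        π.map Prod.fst = γ.map zbar ∧ π.map Prod.snd = μ i} := by
      constructor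
      · rw [hπ, Measure.map_map measurable_fst hm]; rfl
      · rw [hπ, Measure.map_map measurable_snd hm, ← hmarg i]
        rfl
    have : Wpp p d (γ.map zbar) (μ i) ≤
        ∫⁻ q, ENNReal.ofReal (‖q.1 - q.2‖ ^ p) ∂π := by
      exact biInf_le _ hmem
    refine this.trans_eq ?_
    have hme : Measurable fun q : EuclideanSpace ℝ (Fin d) × EuclideanSpace ℝ (Fin d) =>
        ENNReal.ofReal (‖q.1 - q.2‖ ^ p) := by
      exact ((Real.continuous_rpow_const hp0).measurable.comp
        (measurable_fst.sub measurable_snd).norm).ennreal_ofReal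
    rw [hπ, lintegral_map hme hm]
    simp only [norm_sub_rev]
  calc ∑ i, Wpp p d (γ.map zbar) (μ i)
      ≤ ∑ i, ∫⁻ x, ENNReal.ofReal (‖x i - zbar x‖ ^ p) ∂γ :=
        Finset.sum_le_sum fun i _ => key i
    _ = ∫⁻ x, ∑ i, ENNReal.ofReal (‖x i - zbar x‖ ^ p) ∂γ :=
        (lintegral_finset_sum _ fun i _ => hmeas i).symm
    _ = ∫⁻ x, ENNReal.ofReal
        (⨅ z : EuclideanSpace ℝ (Fin d), ∑ i, ‖x i - z‖ ^ p) ∂γ := by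
        refine lintegral_congr fun x => ?_
        rw [← ENNReal.ofReal_sum_of_nonneg (fun i _ => Real.rpow_nonneg (norm_nonneg _) p)]
        congr 1
        refine le_antisymm (le_ciInf (hzbar_min x)) ?_
        exact ciInf_le ⟨0, fun y ⟨w, hw⟩ => hw ▸
          Finset.sum_nonneg fun i _ => Real.rpow_nonneg (norm_nonneg _) p⟩ (zbar x)
end

section
/- Let μ_1,...,μ_N ∈ P_p(ℝ^d) and ν ∈ P_p(ℝ^d), and for each i let π_i be a coupling of ν and μ_i. Then there exists γ ∈ Π(μ_1,...,μ_N) (a coupling of the μ_i obtained by gluing the π_i along ν) such that ∫ c(x_1,...,x_N) dγ ≤ Σ_{i=1}^N ∫ |y - x_i|^p dπ_i. Consequently C(μ_1,...,μ_N) ≤ Σ_{i=1}^N W_p^p(ν, μ_i) for every ν, hence C(μ_1,...,μ_N) ≤ WB(μ_1,...,μ_N). -/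
open scoped BigOperators ENNReal
open MeasureTheory

/-!
Disintegrate each coupling `π i` of `ν` and `μ i` as `ν ⊗ κ i` and let the points `x i` be
conditionally independent given `y`: the measure `ν ⊗ ∏ i, κ i` on `(y, x)` has every `(y, x i)`
marginal equal to `π i`. Its `x`-marginal `γ` couples the `μ i`, and taking `z = y` in the
infimum defining the cost bounds `∫ c dγ` by `∑ i, ∫ ‖y - x i‖ ^ p dπ i`. Since the cost is a
sum, the infima over the `π i` defining each `W_p^p(ν, μ i)` combine into one infimum over
families of couplings, which gives the second bound.
-/

open ProbabilityTheory

namespace ProbabilityTheory.Kernel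

variable {α ι : Type*} [MeasurableSpace α] [Fintype ι] {β : ι → Type*}
  [∀ i, MeasurableSpace (β i)]

noncomputable def pi (κ : ∀ i, Kernel α (β i)) [∀ i, IsMarkovKernel (κ i)] :
    Kernel α (∀ i, β i) where
  toFun a := Measure.pi fun i => κ i a
  measurable' := by
    refine .measure_of_isPiSystem_of_isProbabilityMeasure generateFrom_pi.symm isPiSystem_pi ?_
    rintro _ ⟨t, ht, rfl⟩
    simp only [Measure.pi_pi]
    exact Finset.measurable_prod _ fun i _ => (κ i).measurable_coe (ht i trivial)

variable (κ : ∀ i, Kernel α (β i)) [∀ i, IsMarkovKernel (κ i)]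

lemma pi_apply (a : α) : pi κ a = Measure.pi fun i => κ i a := rfl

instance : IsMarkovKernel (pi κ) := ⟨fun a => by rw [pi_apply]; infer_instance⟩

lemma pi_map_eval (i : ι) : (pi κ).map (Function.eval i) = κ i := by
  ext1 a
  rw [map_apply _ (measurable_pi_apply i), pi_apply,
    (measurePreserving_eval (fun j => κ j a) i).map_eq]

end ProbabilityTheory.Kernel

namespace MeasureTheory.Measure

variable {α ι : Type*} [MeasurableSpace α] [Fintype ι] {β : ι → Type*}
  [∀ i, MeasurableSpace (β i)] [∀ i, StandardBorelSpace (β i)] [∀ i, Nonempty (β i)]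

theorem exists_map_prodMap_eval_eq (ν : Measure α) [IsProbabilityMeasure ν]
    (π : ∀ i, Measure (α × β i)) (hπ : ∀ i, (π i).fst = ν) :
    ∃ ρ : Measure (α × ∀ i, β i), IsProbabilityMeasure ρ ∧
      ∀ i, ρ.map (Prod.map id (Function.eval i)) = π i := by
  have (i : ι) : IsFiniteMeasure (π i) :=
    (isFiniteMeasure_map_iff measurable_fst.aemeasurable).1
      (hπ i ▸ inferInstance : IsFiniteMeasure (π i).fst)
  refine ⟨ν ⊗ₘ Kernel.pi fun i => (π i).condKernel, inferInstance, fun i => ?_⟩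
  rw [← compProd_map (measurable_pi_apply i), Kernel.pi_map_eval, ← hπ i, disintegrate]

theorem exists_lintegral_le_sum_lintegral_of_fst_eq (ν : Measure α) [IsProbabilityMeasure ν]
    (π : ∀ i, Measure (α × β i)) (hπ : ∀ i, (π i).fst = ν) {c : ∀ i, α × β i → ℝ≥0∞}
    (hc : ∀ i, Measurable (c i)) {F : (∀ i, β i) → ℝ≥0∞} (hF : ∀ y x, F x ≤ ∑ i, c i (y, x i)) :
    ∃ γ : Measure (∀ i, β i), IsProbabilityMeasure γ ∧
      (∀ i, γ.map (Function.eval i) = (π i).snd) ∧ ∫⁻ x, F x ∂γ ≤ ∑ i, ∫⁻ q, c i q ∂π i := by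
  obtain ⟨ρ, hρ, hρπ⟩ := exists_map_prodMap_eval_eq ν π hπ
  refine ⟨ρ.map Prod.snd, isProbabilityMeasure_map measurable_snd.aemeasurable, fun i => ?_, ?_⟩
  · rw [← hρπ i, Measure.snd, map_map measurable_snd (by fun_prop),
      map_map (measurable_pi_apply i) measurable_snd]
    rfl
  · calc ∫⁻ x, F x ∂ρ.map Prod.snd
        ≤ ∫⁻ q, F q.2 ∂ρ := lintegral_map_le _ _
      _ ≤ ∫⁻ q, ∑ i, c i (q.1, q.2 i) ∂ρ := lintegral_mono fun q => hF q.1 q.2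
      _ = ∑ i, ∫⁻ q, c i (q.1, q.2 i) ∂ρ :=
        lintegral_finsetSum _ fun i _ => (hc i).comp (by fun_prop)
      _ = ∑ i, ∫⁻ q, c i q ∂π i := Finset.sum_congr rfl fun i _ => by
        rw [← hρπ i, lintegral_map (hc i) (by fun_prop)]
        rfl

end MeasureTheory.Measure

theorem ENNReal.sum_iInf_eq_iInf_pi {ι : Type*} [Fintype ι] {X : ι → Type*}
    [∀ i, Nonempty (X i)] (g : ∀ i, X i → ℝ≥0∞) :
    ∑ i, ⨅ x, g i x = ⨅ x : ∀ i, X i, ∑ i, g i (x i) := by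
  have (i : ι) : ⨅ x : ∀ j, X j, g i (x i) = ⨅ y, g i y :=
    (Function.surjective_eval i).iInf_comp (g i)
  rw [← Finset.sum_congr rfl fun i _ => this i]
  refine (ENNReal.iInf_sum fun s x y => ?_).symm
  refine ⟨fun i => if g i (x i) ≤ g i (y i) then x i else y i, fun i _ => ?_⟩
  dsimp only
  split_ifs with h
  · exact ⟨le_rfl, h⟩
  · exact ⟨(not_le.1 h).le, le_rfl⟩

theorem exists_coupling_multimarginalCost_le_sum {E ι : Type*} [NormedAddCommGroup E]
    [MeasurableSpace E] [BorelSpace E] [SecondCountableTopology E] [CompleteSpace E] [Fintype ι]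
    (p : ℝ) (ν : Measure E) [IsProbabilityMeasure ν] (π : ι → Measure (E × E))
    (hπ : ∀ i, (π i).map Prod.fst = ν) :
    ∃ γ : Measure (ι → E), IsProbabilityMeasure γ ∧
      (∀ i, γ.map (fun x => x i) = (π i).map Prod.snd) ∧
      ∫⁻ x, ENNReal.ofReal (⨅ z, ∑ i, ‖x i - z‖ ^ p) ∂γ ≤
        ∑ i, ∫⁻ q, ENNReal.ofReal (‖q.1 - q.2‖ ^ p) ∂π i := by
  refine Measure.exists_lintegral_le_sum_lintegral_of_fst_eq (β := fun _ => E) ν π hπ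
    (fun i => by fun_prop) fun y x => ?_
  rw [← ENNReal.ofReal_sum_of_nonneg fun i _ => by positivity]
  refine ENNReal.ofReal_le_ofReal ((ciInf_le ⟨0, ?_⟩ y).trans_eq ?_)
  · rintro _ ⟨z, rfl⟩
    positivity
  · simp only [norm_sub_rev]

theorem multimarginal_cost_le_barycentre_cost_general
    (p : ℝ) (d N : ℕ)
    (μ : Fin N → Measure (EuclideanSpace ℝ (Fin d)))
    (ν : Measure (EuclideanSpace ℝ (Fin d)))
    (hνprob : IsProbabilityMeasure ν)
    (π : Fin N → Measure (EuclideanSpace ℝ (Fin d) × EuclideanSpace ℝ (Fin d)))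
    (hπ : ∀ i, (π i).map Prod.fst = ν ∧ (π i).map Prod.snd = μ i) :
    (∃ γ : Measure (Fin N → EuclideanSpace ℝ (Fin d)),
        IsProbabilityMeasure γ ∧ (∀ i, γ.map (fun x => x i) = μ i) ∧
        (∫⁻ x, ENNReal.ofReal
            (⨅ z : EuclideanSpace ℝ (Fin d), ∑ i, ‖x i - z‖ ^ p) ∂γ) ≤
          ∑ i, ∫⁻ q, ENNReal.ofReal (‖q.1 - q.2‖ ^ p) ∂(π i)) ∧
    (⨅ γ ∈ {γ : Measure (Fin N → EuclideanSpace ℝ (Fin d)) |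
        ∀ i, γ.map (fun x => x i) = μ i},
      ∫⁻ x, ENNReal.ofReal
        (⨅ z : EuclideanSpace ℝ (Fin d), ∑ i, ‖x i - z‖ ^ p) ∂γ) ≤
      ∑ i, Wpp p d ν (μ i) := by
  have glue (σ : Fin N → Measure (EuclideanSpace ℝ (Fin d) × EuclideanSpace ℝ (Fin d)))
      (hσ : ∀ i, (σ i).map Prod.fst = ν ∧ (σ i).map Prod.snd = μ i) :=
    exists_coupling_multimarginalCost_le_sum p ν σ (fun i => (hσ i).1)
  refine ⟨?_, ?_⟩
  · simpa only [(hπ _).2] using glue π hπ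
  · have (i : Fin N) : Nonempty
        {σ : Measure (EuclideanSpace ℝ (Fin d) × EuclideanSpace ℝ (Fin d)) //
          σ.map Prod.fst = ν ∧ σ.map Prod.snd = μ i} :=
      ⟨⟨π i, hπ i⟩⟩
    simp only [Wpp, Set.mem_ofPred_eq, iInf_subtype']
    rw [ENNReal.sum_iInf_eq_iInf_pi]
    refine le_iInf fun σ => ?_
    obtain ⟨γ, -, hγμ, hγ⟩ := glue (fun i => σ i) fun i => (σ i).2
    exact iInf_le_of_le ⟨γ, by simpa only [(σ _).2.2] using hγμ⟩ hγ

/-- Gluing the couplings `π i` of `ν` and `μ i` along `ν` gives a multi-marginal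
coupling `γ` with `∫ c dγ ≤ ∑ i, ∫ ‖y - x‖^p dπ i`; consequently
`C(μ₁,…,μ_N) ≤ ∑ i, W_p^p(ν, μ i)`. -/
theorem multimarginal_cost_le_barycentre_cost
    (p : ℝ) (hp : 1 < p) (d N : ℕ) (hd : 1 ≤ d) (hN : 1 ≤ N)
    (μ : Fin N → Measure (EuclideanSpace ℝ (Fin d)))
    (ν : Measure (EuclideanSpace ℝ (Fin d)))
    (hprob : ∀ i, IsProbabilityMeasure (μ i)) (hνprob : IsProbabilityMeasure ν)
    (π : Fin N → Measure (EuclideanSpace ℝ (Fin d) × EuclideanSpace ℝ (Fin d)))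
    (hπ : ∀ i, (π i).map Prod.fst = ν ∧ (π i).map Prod.snd = μ i) :
    (∃ γ : Measure (Fin N → EuclideanSpace ℝ (Fin d)),
        IsProbabilityMeasure γ ∧ (∀ i, γ.map (fun x => x i) = μ i) ∧
        (∫⁻ x, ENNReal.ofReal
            (⨅ z : EuclideanSpace ℝ (Fin d), ∑ i, ‖x i - z‖ ^ p) ∂γ) ≤
          ∑ i, ∫⁻ q, ENNReal.ofReal (‖q.1 - q.2‖ ^ p) ∂(π i)) ∧
    (⨅ γ ∈ {γ : Measure (Fin N → EuclideanSpace ℝ (Fin d)) |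
        ∀ i, γ.map (fun x => x i) = μ i},
      ∫⁻ x, ENNReal.ofReal
        (⨅ z : EuclideanSpace ℝ (Fin d), ∑ i, ‖x i - z‖ ^ p) ∂γ) ≤
      ∑ i, Wpp p d ν (μ i) :=
  multimarginal_cost_le_barycentre_cost_general p d N μ ν hνprob π hπ
end

section
/- Equality of the multi-marginal cost and the split dynamical bound via a common measure: let μ_1,...,μ_N, ν ∈ P_p(ℝ^d), and suppose for each i there is a map T^i with (T^i)_# ν = μ_i, ∫|T^i(y)-y|^p dν < ∞, and Σ_{i=1}^N p|T^i(y)-y|^{p-2}(T^i(y)-y) = 0 for ν-a.e. y. Then the coupling γ = (T^1, ..., T^N)_# ν ∈ Π(μ_1,...,μ_N) satisfies ∫ c(x_1,...,x_N) dγ(x) = Σ_{i=1}^N ∫ |T^i(y) - y|^p dν(y). -/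
open scoped BigOperators ENNReal RealInnerProductSpace
open MeasureTheory


lemma key_ineq {E : Type*} [NormedAddCommGroup E] [InnerProductSpace ℝ E]
    (p : ℝ) (hp : 1 < p) (a b : E) :
    ‖a‖ ^ p + (p * ‖a‖ ^ (p - 2)) * ⟪a, b - a⟫ ≤ ‖b‖ ^ p := by
  have hp0 : (0:ℝ) < p := lt_trans zero_lt_one hp
  by_cases ha : a = 0
  · simp [ha, Real.zero_rpow hp0.ne']
    exact Real.rpow_nonneg (norm_nonneg b) p
  · set s : ℝ := ‖a‖ with hs
    have hs0 : 0 < s := norm_pos_iff.2 ha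
    set t : ℝ := ‖b‖ with ht
    have ht0 : 0 ≤ t := norm_nonneg b
    have hinner : ⟪a, b - a⟫ ≤ s * t - s ^ (2:ℕ) := by
      rw [inner_sub_right, real_inner_self_eq_norm_sq]
      have := real_inner_le_norm a b
      nlinarith
    have hcoef : 0 ≤ p * s ^ (p - 2) := by positivity
    have e1 : s ^ (p - 2) * s = s ^ (p - 1) := by
      rw [← Real.rpow_add_one hs0.ne' (p - 2)]; ring_nf
    have e2 : s ^ (p - 1) * s = s ^ p := by
      rw [← Real.rpow_add_one hs0.ne' (p - 1)]; ring_nf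
    have hbern : 1 + p * (t / s - 1) ≤ (t / s) ^ p := by
      have h1 : (-1:ℝ) ≤ t / s - 1 := by
        have : 0 ≤ t / s := div_nonneg ht0 hs0.le
        linarith
      have := one_add_mul_self_le_rpow_one_add h1 hp.le
      simpa using this
    have hmul : (t / s) ^ p * s ^ p = t ^ p := by
      rw [Real.div_rpow ht0 hs0.le, div_mul_cancel₀]
      exact (Real.rpow_pos_of_pos hs0 p).ne'
    have hsp : 0 < s ^ p := Real.rpow_pos_of_pos hs0 p
    -- multiply Bernoulli by s^p
    have key : s ^ p + p * t * s ^ (p-1) - p * s ^ p ≤ t ^ p := by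
      have := mul_le_mul_of_nonneg_right hbern hsp.le
      rw [hmul] at this
      have expand : (1 + p * (t / s - 1)) * s ^ p = s ^ p + p * t * s ^ (p-1) - p * s ^ p := by
        field_simp
        rw [← e2]
        ring
      linarith [this, expand ▸ this]
    have step : ‖a‖ ^ p + (p * ‖a‖ ^ (p - 2)) * ⟪a, b - a⟫
        ≤ s ^ p + p * s ^ (p-2) * (s * t - s ^ (2:ℕ)) := by
      have := mul_le_mul_of_nonneg_left hinner hcoef
      nlinarith
    have e3 : p * s ^ (p-2) * (s * t - s ^ (2:ℕ)) = p * t * s ^ (p-1) - p * s ^ p := by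
      have : s ^ (2:ℕ) = s * s := sq s
      rw [this, ← e1, ← e2, ← e1]; ring
    linarith [step, e3 ▸ step, key]

lemma iInf_denseRange_eq {E : Type*} [MetricSpace E] [Nonempty E] {g : E → ℝ}
    (hg : Continuous g) (h0 : ∀ z, 0 ≤ g z) {D : ℕ → E} (hD : DenseRange D) :
    ⨅ n, g (D n) = ⨅ z, g z := by
  have bdd1 : BddBelow (Set.range fun n => g (D n)) := by
    refine ⟨0, ?_⟩; rintro x ⟨n, rfl⟩; exact h0 _
  have bdd2 : BddBelow (Set.range g) := by
    refine ⟨0, ?_⟩; rintro x ⟨z, rfl⟩; exact h0 _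
  apply le_antisymm
  · refine le_ciInf fun z => ?_
    refine le_of_forall_pos_le_add fun ε hε => ?_
    obtain ⟨δ, hδ, hcont⟩ := Metric.continuous_iff.1 hg z ε hε
    obtain ⟨n, hn⟩ := hD.exists_dist_lt z hδ
    have h1 := hcont (D n) (by rwa [dist_comm] at hn)
    rw [Real.dist_eq] at h1
    have h2 : g (D n) ≤ g z + ε := by
      have := abs_lt.1 h1; linarith
    exact le_trans (ciInf_le bdd1 n) h2
  · exact le_ciInf fun n => ciInf_le bdd2 (D n)

lemma pointwise_inf {E : Type*} [NormedAddCommGroup E] [InnerProductSpace ℝ E]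
    {n : ℕ} (p : ℝ) (hp : 1 < p) (x : Fin n → E) (y : E)
    (hg : ∑ i, (p * ‖x i - y‖ ^ (p - 2)) • (x i - y) = 0) :
    ⨅ z : E, ∑ i, ‖x i - z‖ ^ p = ∑ i, ‖x i - y‖ ^ p := by
  have bdd : BddBelow (Set.range fun z : E => ∑ i, ‖x i - z‖ ^ p) := by
    refine ⟨0, ?_⟩; rintro r ⟨z, rfl⟩
    exact Finset.sum_nonneg fun i _ => Real.rpow_nonneg (norm_nonneg _) p
  apply le_antisymm
  · exact ciInf_le bdd y
  · refine le_ciInf fun z => ?_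
    have hkey : ∀ i : Fin n, ‖x i - y‖ ^ p + (p * ‖x i - y‖ ^ (p - 2)) * ⟪x i - y, y - z⟫
        ≤ ‖x i - z‖ ^ p := by
      intro i
      have := key_ineq p hp (x i - y) (x i - z)
      have heq : (x i - z) - (x i - y) = y - z := by abel
      rwa [heq] at this
    have hsum := Finset.sum_le_sum fun i (_ : i ∈ Finset.univ) => hkey i
    rw [Finset.sum_add_distrib] at hsum
    have hzero : ∑ i, (p * ‖x i - y‖ ^ (p - 2)) * ⟪x i - y, y - z⟫ = 0 := by
      have : ∑ i, (p * ‖x i - y‖ ^ (p - 2)) * ⟪x i - y, y - z⟫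
          = ⟪∑ i, (p * ‖x i - y‖ ^ (p - 2)) • (x i - y), y - z⟫ := by
        rw [sum_inner]
        exact Finset.sum_congr rfl fun i _ => (real_inner_smul_left _ _ _).symm
      rw [this, hg, inner_zero_left]
    rw [hzero, add_zero] at hsum
    exact hsum

/-- If `(T i)_# ν = μ i` and the first-order condition
`∑ i, p‖T i y - y‖^(p-2) (T i y - y) = 0` holds `ν`-a.e., then the coupling
`γ = (T¹,…,T^N)_# ν` of `μ₁,…,μ_N` satisfies
`∫ c dγ = ∑ i, ∫ ‖T i y - y‖^p dν`. -/
theorem multimarginal_cost_eq_sum_displacements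
    (p : ℝ) (hp : 1 < p) (d N : ℕ) (hd : 1 ≤ d) (hN : 1 ≤ N)
    (μ : Fin N → Measure (EuclideanSpace ℝ (Fin d)))
    (ν : Measure (EuclideanSpace ℝ (Fin d)))
    (hprob : ∀ i, IsProbabilityMeasure (μ i)) (hνprob : IsProbabilityMeasure ν)
    (T : Fin N → EuclideanSpace ℝ (Fin d) → EuclideanSpace ℝ (Fin d))
    (hTmeas : ∀ i, Measurable (T i))
    (hpush : ∀ i, ν.map (T i) = μ i)
    (hmom : ∀ i, ∫⁻ y, ENNReal.ofReal (‖T i y - y‖ ^ p) ∂ν < ∞)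
    (hgrad : ∀ᵐ y ∂ν,
      ∑ i, (p * ‖T i y - y‖ ^ (p - 2)) • (T i y - y) = 0) :
    (∀ i, (ν.map (fun y => fun i => T i y)).map (fun x => x i) = μ i) ∧
    (∫⁻ x, ENNReal.ofReal
        (⨅ z : EuclideanSpace ℝ (Fin d), ∑ i, ‖x i - z‖ ^ p)
        ∂(ν.map (fun y => fun i => T i y))
      = ∑ i, ∫⁻ y, ENNReal.ofReal (‖T i y - y‖ ^ p) ∂ν) := by
  have hp0 : (0:ℝ) ≤ p := le_of_lt (lt_trans zero_lt_one hp)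
  have hg : Measurable (fun y : EuclideanSpace ℝ (Fin d) => fun i => T i y) :=
    measurable_pi_lambda _ fun i => hTmeas i
  have hrpc : Continuous (fun t : ℝ => t ^ p) :=
    continuous_id.rpow_const fun x => Or.inr hp0
  constructor
  · intro i
    rw [Measure.map_map (measurable_pi_apply i) hg]
    exact hpush i
  · obtain ⟨D, hD⟩ : ∃ D : ℕ → EuclideanSpace ℝ (Fin d), DenseRange D :=
      ⟨TopologicalSpace.denseSeq _, TopologicalSpace.denseRange_denseSeq _⟩
    have hFeq : ∀ x : Fin N → EuclideanSpace ℝ (Fin d),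
        (⨅ z : EuclideanSpace ℝ (Fin d), ∑ i, ‖x i - z‖ ^ p)
          = ⨅ n, ∑ i, ‖x i - D n‖ ^ p := by
      intro x
      refine (iInf_denseRange_eq ?_ ?_ hD).symm
      · exact continuous_finset_sum _ fun i _ =>
          ((continuous_const.sub continuous_id).norm).rpow_const fun z => Or.inr hp0
      · intro z
        exact Finset.sum_nonneg fun i _ => Real.rpow_nonneg (norm_nonneg _) p
    have hFmeas : Measurable (fun x : Fin N → EuclideanSpace ℝ (Fin d) =>
        ⨅ z : EuclideanSpace ℝ (Fin d), ∑ i, ‖x i - z‖ ^ p) := by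
      simp only [hFeq]
      refine Measurable.iInf fun n => Finset.measurable_sum _ fun i _ => ?_
      exact hrpc.measurable.comp ((measurable_pi_apply i).sub measurable_const).norm
    have hcost : Measurable (fun x : Fin N → EuclideanSpace ℝ (Fin d) =>
        ENNReal.ofReal (⨅ z : EuclideanSpace ℝ (Fin d), ∑ i, ‖x i - z‖ ^ p)) :=
      ENNReal.measurable_ofReal.comp hFmeas
    rw [lintegral_map hcost hg]
    have hae : ∀ᵐ y ∂ν,
        ENNReal.ofReal (⨅ z : EuclideanSpace ℝ (Fin d), ∑ i, ‖T i y - z‖ ^ p)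
          = ENNReal.ofReal (∑ i, ‖T i y - y‖ ^ p) := by
      filter_upwards [hgrad] with y hy
      rw [pointwise_inf p hp (fun i => T i y) y hy]
    calc ∫⁻ y, ENNReal.ofReal (⨅ z : EuclideanSpace ℝ (Fin d), ∑ i, ‖T i y - z‖ ^ p) ∂ν
        = ∫⁻ y, ENNReal.ofReal (∑ i, ‖T i y - y‖ ^ p) ∂ν := lintegral_congr_ae hae
      _ = ∫⁻ y, ∑ i, ENNReal.ofReal (‖T i y - y‖ ^ p) ∂ν := by
          refine lintegral_congr fun y => ?_
          exact ENNReal.ofReal_sum_of_nonneg fun i _ => Real.rpow_nonneg (norm_nonneg _) p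
      _ = ∑ i, ∫⁻ y, ENNReal.ofReal (‖T i y - y‖ ^ p) ∂ν := by
          refine lintegral_finset_sum _ fun i _ => ?_
          exact ENNReal.measurable_ofReal.comp
            (hrpc.measurable.comp ((hTmeas i).sub measurable_id).norm)
end

section
/- One-dimensional monotonicity of the barycentre: for d = 1 and p ∈ (1,∞), the map (x_1,...,x_N) ↦ z̄(x_1,...,x_N) (the unique minimizer of z ↦ Σ_i |x_i - z|^p) is monotone in each coordinate: if x_i ≤ x_i' for all i, then z̄(x_1,...,x_N) ≤ z̄(x_1',...,x_N'). -/
/-!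
Write `F_x(z) = ∑ i, |x i - z| ^ p`. Since `s ↦ |s| ^ p` is convex, its increments over an
interval of fixed length grow as the interval moves right; applied coordinatewise, this gives,
for `x ≤ x'` and `z' < z`, the exchange inequality `F_x(z') + F_x'(z) ≤ F_x(z) + F_x'(z')`.
If `z'` minimizes `F_x'`, then `F_x(z') ≤ F_x(z)`, so `z'` would be a second minimizer of `F_x`,
which is impossible because `F_x` is strictly convex for `p > 1`.
-/

open Set

theorem ConvexOn.map_add_sub_map_le {𝕜 β : Type*} [Field 𝕜] [LinearOrder 𝕜]
    [IsStrictOrderedRing 𝕜] [AddCommGroup β] [PartialOrder β] [IsOrderedAddMonoid β]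
    [Module 𝕜 β] [PosSMulMono 𝕜 β]
    {s : Set 𝕜} {f : 𝕜 → β} (hf : ConvexOn 𝕜 s f) {u t d : 𝕜} (hu : u ∈ s) (htd : t + d ∈ s)
    (hut : u ≤ t) (hd : 0 ≤ d) : f (u + d) - f u ≤ f (t + d) - f t := by
  rcases (add_le_add hut hd).eq_or_lt with h | h
  · obtain rfl : t = u := by linarith
    obtain rfl : d = 0 := by linarith
    simp
  -- `u + d` and `t` are the convex combinations of `u` and `t + d` with swapped weights
  set L := t + d - u
  have hL : 0 < L := by linarith
  have ha : 0 ≤ (t - u) / L := div_nonneg (sub_nonneg.2 hut) hL.le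
  have hb : 0 ≤ d / L := div_nonneg hd hL.le
  have hsum : (t - u) / L + d / L = 1 := by field_simp; ring
  have h₁ : f (u + d) ≤ ((t - u) / L) • f u + (d / L) • f (t + d) := by
    convert hf.2 hu htd ha hb hsum using 2
    simp only [smul_eq_mul]; field_simp; ring
  have h₂ : f t ≤ (d / L) • f u + ((t - u) / L) • f (t + d) := by
    convert hf.2 hu htd hb ha ((add_comm _ _).trans hsum) using 2
    simp only [smul_eq_mul]; field_simp; ring
  rw [sub_le_sub_iff]
  calc f (u + d) + f t
      ≤ ((t - u) / L) • f u + (d / L) • f (t + d) + ((d / L) • f u + ((t - u) / L) • f (t + d)) :=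
        add_le_add h₁ h₂
    _ = f (t + d) + f u := by
        rw [add_add_add_comm, ← add_smul, ← add_smul, add_comm (d / L), hsum, one_smul, one_smul,
          add_comm]

theorem StrictConvexOn.finset_sum {𝕜 E β ι : Type*} [Field 𝕜] [LinearOrder 𝕜]
    [IsStrictOrderedRing 𝕜] [AddCommMonoid E] [Module 𝕜 E] [AddCommMonoid β] [PartialOrder β]
    [IsOrderedCancelAddMonoid β] [Module 𝕜 β] {s : Set E} {t : Finset ι} (ht : t.Nonempty)
    {f : ι → E → β} (hf : ∀ i ∈ t, StrictConvexOn 𝕜 s (f i)) :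
    StrictConvexOn 𝕜 s fun z => ∑ i ∈ t, f i z := by
  obtain ⟨j, hj⟩ := ht
  refine ⟨(hf j hj).1, fun x hx y hy hxy a b ha hb hab => ?_⟩
  calc ∑ i ∈ t, f i (a • x + b • y) < ∑ i ∈ t, (a • f i x + b • f i y) :=
        Finset.sum_lt_sum_of_nonempty ⟨j, hj⟩ fun i hi => (hf i hi).2 hx hy hxy ha hb hab
    _ = a • ∑ i ∈ t, f i x + b • ∑ i ∈ t, f i y := by
        rw [Finset.sum_add_distrib, Finset.smul_sum, Finset.smul_sum]

theorem convexOn_abs_rpow {p : ℝ} (hp : 1 ≤ p) : ConvexOn ℝ univ fun s : ℝ => |s| ^ p := by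
  refine ⟨convex_univ, fun x _ y _ a b ha hb hab => ?_⟩
  calc |a • x + b • y| ^ p ≤ (a * |x| + b * |y|) ^ p := by
        gcongr; exact (convexOn_univ_norm (E := ℝ)).2 trivial trivial ha hb hab
    _ ≤ a • |x| ^ p + b • |y| ^ p :=
        (convexOn_rpow hp).2 (abs_nonneg x) (abs_nonneg y) ha hb hab

theorem strictConvexOn_abs_rpow {p : ℝ} (hp : 1 < p) :
    StrictConvexOn ℝ univ fun s : ℝ => |s| ^ p := by
  refine ⟨convex_univ, fun x _ y _ hxy a b ha hb hab => ?_⟩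
  by_cases habs : |x| = |y|
  · obtain rfl : x = -y := (abs_eq_abs.mp habs).resolve_left hxy
    have hy : 0 < |y| := abs_pos.2 fun hy => hxy (by simp [hy])
    have hshorter : |a • -y + b • y| < |y| := by
      rw [smul_eq_mul, smul_eq_mul, show a * -y + b * y = (b - a) * y by ring, abs_mul]
      exact mul_lt_of_lt_one_left hy (abs_lt.2 ⟨by linarith, by linarith⟩)
    calc |a • -y + b • y| ^ p < |y| ^ p := by gcongr
      _ = a • |-y| ^ p + b • |y| ^ p := by rw [abs_neg, ← add_smul, hab, one_smul]
  · calc |a • x + b • y| ^ p ≤ (a * |x| + b * |y|) ^ p := by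
          gcongr; exact (convexOn_univ_norm (E := ℝ)).2 trivial trivial ha.le hb.le hab
      _ < a • |x| ^ p + b • |y| ^ p :=
          (strictConvexOn_rpow hp).2 (abs_nonneg x) (abs_nonneg y) habs ha hb hab

noncomputable def lpCost {ι : Type*} [Fintype ι] (p : ℝ) (x : ι → ℝ) (z : ℝ) : ℝ :=
  ∑ i, |x i - z| ^ p

theorem strictConvexOn_lpCost {ι : Type*} [Fintype ι] [Nonempty ι] {p : ℝ} (hp : 1 < p)
    (x : ι → ℝ) : StrictConvexOn ℝ univ (lpCost p x) := by
  refine StrictConvexOn.finset_sum Finset.univ_nonempty fun i _ => ?_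
  simpa [Function.comp_def, abs_sub_comm, neg_add_eq_sub] using
    (strictConvexOn_abs_rpow hp).translate_right (-x i)

theorem lpCost_add_lpCost_le {ι : Type*} [Fintype ι] {p : ℝ} (hp : 1 ≤ p) {x x' : ι → ℝ}
    (hx : ∀ i, x i ≤ x' i) {w z : ℝ} (hwz : w ≤ z) :
    lpCost p x w + lpCost p x' z ≤ lpCost p x z + lpCost p x' w := by
  simp only [lpCost, ← Finset.sum_add_distrib]
  refine Finset.sum_le_sum fun i _ => ?_
  have := (convexOn_abs_rpow hp).map_add_sub_map_le trivial trivial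
    (sub_le_sub_right (hx i) z) (sub_nonneg.2 hwz)
  simp only [sub_add_sub_cancel] at this
  linarith

/-- One-dimensional monotonicity of the barycentre: if `z` minimizes
`z ↦ ∑ i, |x i - z| ^ p` and `z'` minimizes `z ↦ ∑ i, |x' i - z| ^ p` with
`x i ≤ x' i` for all `i`, then `z ≤ z'`. -/
theorem barycentre_monotone_one_dim
    (p : ℝ) (hp : 1 < p) (N : ℕ) (hN : 1 ≤ N)
    (x x' : Fin N → ℝ) (hle : ∀ i, x i ≤ x' i)
    (z z' : ℝ)
    (hz : ∀ w : ℝ, ∑ i, |x i - z| ^ p ≤ ∑ i, |x i - w| ^ p)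
    (hz' : ∀ w : ℝ, ∑ i, |x' i - z'| ^ p ≤ ∑ i, |x' i - w| ^ p) :
    z ≤ z' := by
  have : Nonempty (Fin N) := ⟨⟨0, hN⟩⟩
  by_contra! hlt
  have hswap := lpCost_add_lpCost_le hp.le hle hlt.le
  have hz'z : lpCost p x' z' ≤ lpCost p x' z := hz' z
  have hmin : IsMinOn (lpCost p x) univ z := isMinOn_univ_iff.2 hz
  have hmin' : IsMinOn (lpCost p x) univ z' := isMinOn_univ_iff.2 fun w =>
    calc lpCost p x z' ≤ lpCost p x z := by linarith
      _ ≤ lpCost p x w := hz w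
  exact hlt.ne ((strictConvexOn_lpCost hp x).eq_of_isMinOn hmin' hmin trivial trivial)
end
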